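/- arXiv:1907.02304 — 5 statements merged into one kernel-verified Lean document; each statement's English description precedes it below -/
import Mathlib

section
/- For every natural number n there exists a constant C(n) > 0 such that for all nonzero x, y ∈ ℝ³ one has ‖DⁿΦ(x) − DⁿΦ(y)‖ ≤ C(n)·(‖x‖^{−(2+n)} + ‖y‖^{−(2+n)})·‖x − y‖, where DⁿΦ is the n-th Fréchet derivative of the Oseen tensor (the case n = 0 reads ‖Φ(x) − Φ(y)‖ ≤ C(‖x‖⁻² + ‖y‖⁻²)‖x − y‖). -/
noncomputable section

/-- Euclidean `ℝ³`. -/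
abbrev E3 : Type := EuclideanSpace ℝ (Fin 3)

/-- The Oseen tensor `Φ(x) = (1/(8π)) (‖x‖⁻¹ I + ‖x‖⁻³ x xᵀ)`, viewed as a continuous
linear map on `ℝ³` (the outer product `x xᵀ` acts as `y ↦ ⟪x, y⟫ x`).
For `x = 0` the formula gives `0` by the convention `0⁻¹ = 0`. -/
def oseenTensor (x : E3) : E3 →L[ℝ] E3 :=
  (8 * Real.pi)⁻¹ • (‖x‖⁻¹ • ContinuousLinearMap.id ℝ E3 +
    (‖x‖ ^ 3)⁻¹ • (innerSL ℝ x).smulRight x)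

/-! `Φ` is smooth off the origin and positively homogeneous of degree `-1`, so `DⁿΦ` is
homogeneous of degree `-(n+1)`, and compactness of the unit sphere gives
`‖DⁿΦ x‖ ≤ M ‖x‖^{-(n+1)}`. For the difference, let `‖x‖ ≤ ‖y‖`. If `‖x - y‖ ≥ ‖x‖ / 2`,
the triangle inequality and this size bound suffice. Otherwise the ball of radius `‖x‖ / 2`
about `x` contains `y` and stays at distance at least `‖x‖ / 2` from the origin, and the mean
value inequality with the bound on `Dⁿ⁺¹Φ` applies. -/

open scoped ContDiff

section ScalarRescaling

/- Scaling by `a ≠ 0` is a linear equivalence, so, unlike `iteratedFDeriv_const_smul_apply` and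
`iteratedFDeriv_comp_const_smul`, these need no smoothness of `f`: `Φ` is singular at `0`. -/

variable {𝕜 E F : Type*} [NontriviallyNormedField 𝕜] [NormedAddCommGroup E] [NormedSpace 𝕜 E]
  [NormedAddCommGroup F] [NormedSpace 𝕜 F]

theorem iteratedFDeriv_const_smul_apply_of_ne_zero {a : 𝕜} (ha : a ≠ 0) (f : E → F) (x : E)
    (n : ℕ) : iteratedFDeriv 𝕜 n (a • f) x = a • iteratedFDeriv 𝕜 n f x :=
  (ContinuousLinearEquiv.smulLeft (R₁ := 𝕜) (Units.mk0 a ha)).iteratedFDeriv_comp_left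

theorem iteratedFDeriv_comp_const_smul_of_ne_zero {a : 𝕜} (ha : a ≠ 0) (f : E → F) (x : E)
    (n : ℕ) :
    iteratedFDeriv 𝕜 n (fun z ↦ f (a • z)) x = a ^ n • iteratedFDeriv 𝕜 n f (a • x) := by
  let g : E ≃L[𝕜] E := ContinuousLinearEquiv.smulLeft (Units.mk0 a ha)
  have hg : ⇑g = (a • ·) := rfl
  have h := g.iteratedFDerivWithin_comp_right f uniqueDiffOn_univ (Set.mem_univ (g x)) n
  rw [Set.preimage_univ, iteratedFDerivWithin_univ, iteratedFDerivWithin_univ, hg] at h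
  ext m
  simp only [Function.comp_def] at h
  rw [h, ContinuousMultilinearMap.compContinuousLinearMap_apply]
  simp only [ContinuousLinearEquiv.coe_coe, hg, ContinuousMultilinearMap.map_smul_univ,
    Finset.prod_const, Finset.card_univ, Fintype.card_fin, smul_apply]

end ScalarRescaling

section Homogeneous

variable {E F : Type*} [NormedAddCommGroup E] [NormedSpace ℝ E]
  [NormedAddCommGroup F] [NormedSpace ℝ F]

theorem iteratedFDeriv_apply_smul_of_homogeneous {f : E → F} {k : ℕ}
    (hf : ∀ c : ℝ, 0 < c → ∀ x, f (c • x) = (c ^ k)⁻¹ • f x) (n : ℕ) {c : ℝ} (hc : 0 < c)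
    (x : E) : iteratedFDeriv ℝ n f (c • x) = (c ^ (k + n))⁻¹ • iteratedFDeriv ℝ n f x := by
  have h := iteratedFDeriv_comp_const_smul_of_ne_zero hc.ne' f x n
  simp_rw [hf c hc] at h
  rw [← Pi.smul_def, iteratedFDeriv_const_smul_apply_of_ne_zero (by positivity)] at h
  rw [pow_add, mul_inv_rev, mul_smul, h, inv_smul_smul₀ (by positivity)]

theorem exists_norm_iteratedFDeriv_le_of_homogeneous [ProperSpace E] {f : E → F} {k : ℕ}
    (hf : ∀ c : ℝ, 0 < c → ∀ x, f (c • x) = (c ^ k)⁻¹ • f x) {n : ℕ}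
    (hcont : ∀ x ≠ 0, ContinuousAt (iteratedFDeriv ℝ n f) x) :
    ∃ M, 0 < M ∧ ∀ x ≠ 0, ‖iteratedFDeriv ℝ n f x‖ ≤ M * (‖x‖ ^ (k + n))⁻¹ := by
  obtain ⟨M, hM⟩ := (isCompact_sphere (0 : E) 1).exists_bound_of_continuousOn
    (continuousOn_of_forall_continuousAt fun u hu ↦ hcont u (ne_zero_of_mem_unit_sphere ⟨u, hu⟩))
  refine ⟨max M 1, by positivity, fun x hx ↦ ?_⟩
  have hx' : 0 < ‖x‖ := norm_pos_iff.2 hx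
  have hu : ‖x‖⁻¹ • x ∈ Metric.sphere (0 : E) 1 := by
    simpa using norm_smul_inv_norm (𝕜 := ℝ) hx
  calc ‖iteratedFDeriv ℝ n f x‖
      = (‖x‖ ^ (k + n))⁻¹ * ‖iteratedFDeriv ℝ n f (‖x‖⁻¹ • x)‖ := by
        rw [← norm_smul_of_nonneg (by positivity),
          ← iteratedFDeriv_apply_smul_of_homogeneous hf n hx', smul_inv_smul₀ hx'.ne']
    _ ≤ (‖x‖ ^ (k + n))⁻¹ * max M 1 := by gcongr; exact (hM _ hu).trans (le_max_left _ _)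
    _ = max M 1 * (‖x‖ ^ (k + n))⁻¹ := mul_comm _ _

end Homogeneous

section Decay

variable {E F : Type*} [NormedAddCommGroup E] [NormedAddCommGroup F]
  {f : E → F} {k : ℕ} {M M' : ℝ}

theorem norm_sub_le_of_norm_le_inv_pow (hf : ∀ x ≠ 0, ‖f x‖ ≤ M * (‖x‖ ^ k)⁻¹) {x y : E}
    (hx : x ≠ 0) (hy : y ≠ 0) (hxy : ‖x‖ ≤ ‖y‖) (hfar : ‖x‖ ≤ 2 * ‖x - y‖) :
    ‖f x - f y‖ ≤ 4 * M * (‖x‖ ^ (k + 1))⁻¹ * ‖x - y‖ := by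
  have hx' : 0 < ‖x‖ := norm_pos_iff.2 hx
  have hM : 0 ≤ M := nonneg_of_mul_nonneg_left ((norm_nonneg _).trans (hf x hx)) (by positivity)
  calc ‖f x - f y‖ ≤ ‖f x‖ + ‖f y‖ := norm_sub_le _ _
    _ ≤ M * (‖x‖ ^ k)⁻¹ + M * (‖y‖ ^ k)⁻¹ := add_le_add (hf x hx) (hf y hy)
    _ ≤ M * (‖x‖ ^ k)⁻¹ + M * (‖x‖ ^ k)⁻¹ := by gcongr
    _ = 2 * M * (‖x‖ ^ (k + 1))⁻¹ * ‖x‖ := by field_simp; ring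
    _ ≤ 2 * M * (‖x‖ ^ (k + 1))⁻¹ * (2 * ‖x - y‖) := by gcongr
    _ = 4 * M * (‖x‖ ^ (k + 1))⁻¹ * ‖x - y‖ := by ring

variable [NormedSpace ℝ E] [NormedSpace ℝ F]

theorem norm_sub_le_of_norm_fderiv_le_inv_pow (hdiff : ∀ x ≠ 0, DifferentiableAt ℝ f x)
    (hf' : ∀ x ≠ 0, ‖fderiv ℝ f x‖ ≤ M' * (‖x‖ ^ (k + 1))⁻¹) {x y : E} (hx : x ≠ 0)
    (hclose : 2 * ‖x - y‖ ≤ ‖x‖) :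
    ‖f x - f y‖ ≤ 2 ^ (k + 1) * M' * (‖x‖ ^ (k + 1))⁻¹ * ‖x - y‖ := by
  have hx' : 0 < ‖x‖ := norm_pos_iff.2 hx
  have hM' : 0 ≤ M' :=
    nonneg_of_mul_nonneg_left ((norm_nonneg _).trans (hf' x hx)) (by positivity)
  set s := Metric.closedBall x (‖x‖ / 2)
  have hs : ∀ z ∈ s, ‖x‖ / 2 ≤ ‖z‖ := fun z hz ↦ by
    rw [Metric.mem_closedBall, dist_eq_norm] at hz
    linarith [norm_sub_norm_le x z, norm_sub_rev x z]
  have hs0 : ∀ z ∈ s, z ≠ 0 := fun z hz ↦ norm_pos_iff.1 (by linarith [hs z hz])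
  have hbound : ∀ z ∈ s, ‖fderiv ℝ f z‖ ≤ 2 ^ (k + 1) * M' * (‖x‖ ^ (k + 1))⁻¹ := fun z hz ↦
    calc ‖fderiv ℝ f z‖ ≤ M' * (‖z‖ ^ (k + 1))⁻¹ := hf' z (hs0 z hz)
      _ ≤ M' * ((‖x‖ / 2) ^ (k + 1))⁻¹ := by gcongr; exact hs z hz
      _ = 2 ^ (k + 1) * M' * (‖x‖ ^ (k + 1))⁻¹ := by rw [div_pow, inv_div]; ring
  have hy : y ∈ s := by
    rw [Metric.mem_closedBall, dist_eq_norm, norm_sub_rev]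
    linarith
  exact (convex_closedBall x _).norm_image_sub_le_of_norm_fderiv_le
    (fun z hz ↦ hdiff z (hs0 z hz)) hbound hy (Metric.mem_closedBall_self (by positivity))

theorem norm_sub_le_of_norm_le_inv_pow_of_norm_fderiv_le_inv_pow
    (hdiff : ∀ x ≠ 0, DifferentiableAt ℝ f x) (hf : ∀ x ≠ 0, ‖f x‖ ≤ M * (‖x‖ ^ k)⁻¹)
    (hf' : ∀ x ≠ 0, ‖fderiv ℝ f x‖ ≤ M' * (‖x‖ ^ (k + 1))⁻¹) {x y : E} (hx : x ≠ 0)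
    (hy : y ≠ 0) :
    ‖f x - f y‖ ≤
      (4 * M + 2 ^ (k + 1) * M') * ((‖x‖ ^ (k + 1))⁻¹ + (‖y‖ ^ (k + 1))⁻¹) * ‖x - y‖ := by
  wlog hxy : ‖x‖ ≤ ‖y‖ generalizing x y
  · have h := this hy hx (le_of_not_ge hxy)
    rwa [norm_sub_rev (f y), norm_sub_rev y, add_comm (‖y‖ ^ (k + 1))⁻¹] at h
  have hM : 0 ≤ M := nonneg_of_mul_nonneg_left ((norm_nonneg _).trans (hf x hx)) (by positivity)
  have hM' : 0 ≤ M' :=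
    nonneg_of_mul_nonneg_left ((norm_nonneg _).trans (hf' x hx)) (by positivity)
  have key : ‖f x - f y‖ ≤ (4 * M + 2 ^ (k + 1) * M') * (‖x‖ ^ (k + 1))⁻¹ * ‖x - y‖ := by
    rcases le_total ‖x‖ (2 * ‖x - y‖) with hfar | hclose
    · refine (norm_sub_le_of_norm_le_inv_pow hf hx hy hxy hfar).trans ?_
      gcongr
      exact le_add_of_nonneg_right (by positivity)
    · refine (norm_sub_le_of_norm_fderiv_le_inv_pow hdiff hf' hx hclose).trans ?_
      gcongr
      exact le_add_of_nonneg_left (by positivity)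
  refine key.trans ?_
  gcongr
  exact le_add_of_nonneg_right (by positivity)

end Decay

theorem contDiffAt_oseenTensor {x : E3} (hx : x ≠ 0) : ContDiffAt ℝ ∞ oseenTensor x := by
  have hnorm : ContDiffAt ℝ ∞ (‖·‖) x := contDiffAt_norm ℝ hx
  have hnorm0 : ‖x‖ ≠ 0 := norm_ne_zero_iff.2 hx
  have houter : ContDiff ℝ ∞ fun y : E3 ↦ (innerSL ℝ y).smulRight y :=
    (isBoundedBilinearMap_smulRight (𝕜 := ℝ) (E := E3) (F := E3)).contDiff.comp
      ((innerSL ℝ).contDiff.prodMk contDiff_id)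
  exact (((hnorm.inv hnorm0).smul contDiffAt_const).add
    (((hnorm.pow 3).inv (pow_ne_zero 3 hnorm0)).smul houter.contDiffAt)).const_smul _

theorem oseenTensor_smul {c : ℝ} (hc : 0 < c) (x : E3) :
    oseenTensor (c • x) = c⁻¹ • oseenTensor x := by
  have h : (innerSL ℝ (c • x)).smulRight (c • x) = c ^ 2 • (innerSL ℝ x).smulRight x := by
    ext v : 1
    simp only [map_smul, ContinuousLinearMap.smulRight_apply, smul_apply, innerSL_apply_apply,
      smul_smul]
    ring_nf
  rw [oseenTensor, oseenTensor, h, norm_smul, Real.norm_of_nonneg hc.le]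
  match_scalars <;> field_simp

/-- for every `n` there is `C(n) > 0` such that for all nonzero `x, y ∈ ℝ³`,
`‖DⁿΦ(x) − DⁿΦ(y)‖ ≤ C(n) (‖x‖^{−(2+n)} + ‖y‖^{−(2+n)}) ‖x − y‖`. -/
theorem oseenTensor_iteratedFDeriv_lipschitz_decay :
    ∀ n : ℕ, ∃ C : ℝ, 0 < C ∧ ∀ x y : E3, x ≠ 0 → y ≠ 0 →
      ‖iteratedFDeriv ℝ n oseenTensor x - iteratedFDeriv ℝ n oseenTensor y‖
        ≤ C * ((‖x‖ ^ (2 + n))⁻¹ + (‖y‖ ^ (2 + n))⁻¹) * ‖x - y‖ := by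
  intro n
  have hhom : ∀ c : ℝ, 0 < c → ∀ x, oseenTensor (c • x) = (c ^ 1)⁻¹ • oseenTensor x :=
    fun c hc x ↦ by rw [pow_one, oseenTensor_smul hc]
  have hcont (m : ℕ) (x : E3) (hx : x ≠ 0) : ContinuousAt (iteratedFDeriv ℝ m oseenTensor) x :=
    (contDiffAt_oseenTensor hx).continuousAt_iteratedFDeriv (by exact_mod_cast le_top)
  obtain ⟨M, hM, hbound⟩ := exists_norm_iteratedFDeriv_le_of_homogeneous hhom (hcont n)
  obtain ⟨M', hM', hbound'⟩ := exists_norm_iteratedFDeriv_le_of_homogeneous hhom (hcont (n + 1))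
  refine ⟨4 * M + 2 ^ (1 + n + 1) * M', by positivity, fun x y hx hy ↦ ?_⟩
  rw [show 2 + n = 1 + n + 1 by omega]
  exact norm_sub_le_of_norm_le_inv_pow_of_norm_fderiv_le_inv_pow
    (fun z hz ↦ (contDiffAt_oseenTensor hz).differentiableAt_iteratedFDeriv
      (by exact_mod_cast WithTop.coe_lt_top _))
    hbound (fun z hz ↦ by rw [norm_fderiv_iteratedFDeriv]; exact hbound' z hz) hx hy

end
end

section
/- For every fixed vector e ∈ ℝ³, the vector field x ↦ Φ(x)·e is divergence free on ℝ³ ∖ {0}: for every nonzero x ∈ ℝ³, the sum over i = 1,2,3 of the i-th partial derivative at x of the i-th component of x ↦ Φ(x)·e equals zero. -/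
/-!
Write `8π Φ(y) e = r⁻¹ e + ψ(y) y` with `r = ‖y‖` and `ψ(y) = r⁻³ ⟪y, e⟫`. The divergence is the
trace of the derivative. The first term contributes `⟪∇(r⁻¹), e⟫ = -r⁻³ ⟪y, e⟫`; the second
contributes `⟪∇ψ, y⟫ + n ψ = (-3 + 1 + n) r⁻³ ⟪y, e⟫` in dimension `n`. The total,
`(n - 3) r⁻³ ⟪y, e⟫`, vanishes exactly in dimension three.
-/

noncomputable section

open scoped RealInnerProductSpace

section
variable {E : Type*} [NormedAddCommGroup E] [InnerProductSpace ℝ E]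

theorem hasFDerivAt_norm_rpow_of_ne_zero {x : E} (hx : x ≠ 0) (p : ℝ) :
    HasFDerivAt (fun y : E => ‖y‖ ^ p) ((p * ‖x‖ ^ (p - 2)) • innerSL ℝ x) x := by
  apply HasStrictFDerivAt.hasFDerivAt
  -- `‖y‖ ^ p = (‖y‖ ^ 2) ^ (p / 2)`, and `‖y‖ ^ 2` is smooth with nonzero value at `x`
  convert! (hasStrictFDerivAt_norm_sq x).rpow_const (p := p / 2) (by simp [hx]) using 0
  simp_rw [← Real.rpow_natCast_mul (norm_nonneg _), ← Nat.cast_smul_eq_nsmul ℝ, smul_smul]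
  ring_nf

/-- `8π Φ(y) e`, in any real inner product space; the powers of `‖y‖` are real powers so that
a single formula (`hasFDerivAt_norm_rpow_of_ne_zero`) differentiates both. -/
def stokeslet (e y : E) : E := ‖y‖ ^ (-1 : ℝ) • e + (‖y‖ ^ (-3 : ℝ) * ⟪y, e⟫) • y

theorem hasFDerivAt_stokeslet (e : E) {x : E} (hx : x ≠ 0) :
    HasFDerivAt (stokeslet e)
      ((-‖x‖ ^ (-3 : ℝ)) • (innerSL ℝ x).smulRight e +
        (‖x‖ ^ (-3 : ℝ) * ⟪x, e⟫) • ContinuousLinearMap.id ℝ E +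
        (‖x‖ ^ (-3 : ℝ) • innerSL ℝ e - (3 * ‖x‖ ^ (-5 : ℝ) * ⟪x, e⟫) • innerSL ℝ x).smulRight x)
      x := by
  have hinner : HasFDerivAt (fun y : E => ⟪y, e⟫) (innerSL ℝ e) x := by
    simp_rw [real_inner_comm e]
    exact (innerSL ℝ e).hasFDerivAt
  have h := ((hasFDerivAt_norm_rpow_of_ne_zero hx (-1)).smul_const e).add
    (((hasFDerivAt_norm_rpow_of_ne_zero hx (-3)).mul hinner).smul (hasFDerivAt_id x))
  refine h.congr_fderiv ?_
  ext v
  norm_num [smul_smul]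
  module

variable [FiniteDimensional ℝ E]

theorem trace_fderiv_stokeslet (e : E) {x : E} (hx : x ≠ 0) :
    LinearMap.trace ℝ E (fderiv ℝ (stokeslet e) x) =
      (Module.finrank ℝ E - 3) * ‖x‖ ^ (-3 : ℝ) * ⟪x, e⟫ := by
  have hr : ‖x‖ ≠ 0 := norm_ne_zero_iff.mpr hx
  rw [(hasFDerivAt_stokeslet e hx).fderiv]
  simp only [Real.rpow_neg_ofNat, Int.reduceNeg, zpow_neg, zpow_ofNat, neg_smul, real_inner_comm e x,
    ContinuousLinearMap.toLinearMap_add, ContinuousLinearMap.toLinearMap_neg, ContinuousLinearMap.toLinearMap_smul,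
    ContinuousLinearMap.coe_smulRight, ContinuousLinearMap.toLinearMap_innerSL_apply, ContinuousLinearMap.coe_id,
    ContinuousLinearMap.toLinearMap_sub, map_add, map_neg, map_smul, LinearMap.trace_smulRight, innerₛₗ_apply_apply,
    smul_eq_mul, LinearMap.trace_id, LinearMap.sub_apply, LinearMap.smul_apply, inner_self_eq_norm_sq_to_K,
    Real.ringHom_apply]
  field_simp
  ring

end

theorem sum_fderiv_apply_single_eq_trace {n : ℕ}
    {F : EuclideanSpace ℝ (Fin n) → EuclideanSpace ℝ (Fin n)} {x : EuclideanSpace ℝ (Fin n)}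
    (hF : DifferentiableAt ℝ F x) :
    ∑ i, fderiv ℝ (fun y => F y i) x (EuclideanSpace.single i 1) =
      LinearMap.trace ℝ (EuclideanSpace ℝ (Fin n)) (fderiv ℝ F x) := by
  rw [LinearMap.trace_eq_sum_inner _ (EuclideanSpace.basisFun (Fin n) ℝ)]
  refine Finset.sum_congr rfl fun i _ => ?_
  have hFi : HasFDerivAt (fun y => F y i) ((EuclideanSpace.proj i).comp (fderiv ℝ F x)) x :=
    (EuclideanSpace.proj (𝕜 := ℝ) i).hasFDerivAt.comp x hF.hasFDerivAt
  simp [hFi.fderiv, EuclideanSpace.inner_single_left]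

theorem oseenTensor_apply_eq_smul_stokeslet (y e : E3) :
    oseenTensor y e = (8 * Real.pi)⁻¹ • stokeslet e y := by
  simp [oseenTensor, stokeslet, Real.rpow_neg (norm_nonneg y), smul_smul, mul_assoc]

/-- for every fixed `e ∈ ℝ³`, the vector field `x ↦ Φ(x)·e` is divergence free
on `ℝ³ \ {0}`: for every nonzero `x`, the sum over `i` of the `i`-th partial derivative at
`x` of the `i`-th component of `x ↦ Φ(x)·e` vanishes. -/
theorem oseenTensor_apply_divergence_free (e : E3) (x : E3) (hx : x ≠ 0) :
    ∑ i : Fin 3,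
      fderiv ℝ (fun y : E3 => oseenTensor y e i) x (EuclideanSpace.single i 1) = 0 := by
  have hΦ : (fun y : E3 => oseenTensor y e) = (8 * Real.pi)⁻¹ • stokeslet e :=
    funext fun y => oseenTensor_apply_eq_smul_stokeslet y e
  have hdiff := (hasFDerivAt_stokeslet e hx).differentiableAt
  have hΦdiff : DifferentiableAt ℝ (fun y : E3 => oseenTensor y e) x :=
    hΦ ▸ hdiff.const_smul _
  rw [sum_fderiv_apply_single_eq_trace hΦdiff, hΦ, fderiv_const_smul hdiff,
    ContinuousLinearMap.toLinearMap_smul, map_smul, trace_fderiv_stokeslet e hx,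
    finrank_euclideanSpace_fin]
  norm_num

end
end

section
/- The pair (Φ, P) solves the homogeneous steady Stokes equations away from the origin: for every fixed vector e ∈ ℝ³ and every nonzero x ∈ ℝ³, the (componentwise) Laplacian at x of the vector field y ↦ Φ(y)·e equals the gradient at x of the scalar function y ↦ ⟨P(y), e⟩; that is, −Δ(Φ(·)e)(x) + ∇(P(·)·e)(x) = 0. -/
/-!
Write `r = ‖y‖`, so that `Φ(y) e = (8π)⁻¹ (r⁻¹ e + r⁻³ ⟪y, e⟫ y)`. Its second directional
derivatives along a vector `v` are explicit rational expressions in `r`, `⟪y, v⟫`, `⟪e, v⟫` and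
`‖v‖`. Summing them over an orthonormal basis of an `n`-dimensional space, Parseval's identities
give `Δ(Φ e)(x) = (8π)⁻¹ ((5 - n) r⁻³ e - 3 (n - 1) r⁻⁵ ⟪x, e⟫ x)`. For `n = 3` this is
`(4π)⁻¹ (r⁻³ e - 3 r⁻⁵ ⟪x, e⟫ x)`, which is exactly the gradient of `⟪P(y), e⟫ = (4π)⁻¹ r⁻³ ⟪y, e⟫`.
-/

noncomputable section

/-- The pressure associated to the Oseen tensor: `P(x) = x / (4π‖x‖³)`. -/
def oseenPressure (x : E3) : E3 := (4 * Real.pi * ‖x‖ ^ 3)⁻¹ • x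

open Real
open scoped RealInnerProductSpace Topology

section InnerProductSpace

variable {E : Type*} [NormedAddCommGroup E] [InnerProductSpace ℝ E]

theorem hasFDerivAt_norm_of_ne_zero {x : E} (hx : x ≠ 0) :
    HasFDerivAt (‖·‖) (‖x‖⁻¹ • innerSL ℝ x) x := by
  have h := (hasStrictFDerivAt_norm_sq x).hasFDerivAt.sqrt (by positivity)
  simp only [Real.sqrt_sq (norm_nonneg _)] at h
  refine h.congr_fderiv ?_
  ext v
  simp only [smul_apply, innerSL_apply_apply, smul_eq_mul, nsmul_eq_mul, Nat.cast_ofNat]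
  field_simp

theorem hasFDerivAt_inv_norm_pow (k : ℕ) {x : E} (hx : x ≠ 0) :
    HasFDerivAt (fun y : E => (‖y‖ ^ k)⁻¹) ((-k * (‖x‖ ^ (k + 2))⁻¹) • innerSL ℝ x) x := by
  have hx' : ‖x‖ ≠ 0 := norm_ne_zero_iff.mpr hx
  have h := ((hasDerivAt_pow k ‖x‖).inv (pow_ne_zero k hx')).comp_hasFDerivAt x
    (hasFDerivAt_norm_of_ne_zero hx)
  refine h.congr_fderiv ?_
  rw [smul_smul]
  congr 1
  rcases k with _ | k
  · simp
  · simp only [Nat.add_sub_cancel]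
    field_simp
    ring

theorem hasFDerivAt_inner_const_right (e x : E) : HasFDerivAt (⟪·, e⟫) (innerSL ℝ e) x := by
  convert (innerSL ℝ e).hasFDerivAt (x := x) using 1
  exact funext fun y => real_inner_comm e y

def oseenField (e y : E) : E := (8 * π)⁻¹ • (‖y‖⁻¹ • e + ((‖y‖ ^ 3)⁻¹ * ⟪y, e⟫) • y)

theorem fderiv_oseenField_apply_eventuallyEq (e v : E) {x : E} (hx : x ≠ 0) :
    (fderiv ℝ (oseenField e) · v) =ᶠ[𝓝 x] fun y => (8 * π)⁻¹ •
      ((-((‖y‖ ^ 3)⁻¹ * ⟪y, v⟫)) • e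
        + ((‖y‖ ^ 3)⁻¹ * ⟪e, v⟫ - 3 * (‖y‖ ^ 5)⁻¹ * ⟪y, e⟫ * ⟪y, v⟫) • y
        + ((‖y‖ ^ 3)⁻¹ * ⟪y, e⟫) • v) := by
  filter_upwards [eventually_ne_nhds hx] with y hy
  have h1 := hasFDerivAt_inv_norm_pow 1 hy
  simp only [pow_one] at h1
  have h : HasFDerivAt (oseenField e) _ y :=
    ((h1.smul_const e).add
      (((hasFDerivAt_inv_norm_pow 3 hy).mul (hasFDerivAt_inner_const_right e y)).smul
        (hasFDerivAt_id y))).const_smul (8 * π)⁻¹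
  rw [h.fderiv]
  simp only [smul_apply, add_apply, ContinuousLinearMap.smulRight_apply, innerSL_apply_apply,
    Pi.mul_apply, ContinuousLinearMap.id_apply, id, smul_eq_mul, Nat.cast_one, Nat.cast_ofNat]
  module

/- The terms are grouped so that `v` enters only through `⟪x, v⟫ ^ 2`, `‖v‖ ^ 2`,
`⟪x, v⟫ * ⟪e, v⟫`, `⟪e, v⟫ • v` and `⟪x, v⟫ • v`, whose sums over an orthonormal basis are known. -/
theorem fderiv_fderiv_oseenField_apply (e v : E) {x : E} (hx : x ≠ 0) :
    fderiv ℝ (fderiv ℝ (oseenField e) · v) x v = (8 * π)⁻¹ •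
      ((3 * (‖x‖ ^ 5)⁻¹ * ⟪x, v⟫ ^ 2 - (‖x‖ ^ 3)⁻¹ * ‖v‖ ^ 2) • e
        + (15 * (‖x‖ ^ 7)⁻¹ * ⟪x, e⟫ * ⟪x, v⟫ ^ 2 - 3 * (‖x‖ ^ 5)⁻¹ * ⟪x, e⟫ * ‖v‖ ^ 2
            - 6 * (‖x‖ ^ 5)⁻¹ * (⟪x, v⟫ * ⟪e, v⟫)) • x
        + (2 * (‖x‖ ^ 3)⁻¹) • ⟪e, v⟫ • v - (6 * (‖x‖ ^ 5)⁻¹ * ⟪x, e⟫) • ⟪x, v⟫ • v) := by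
  have h3 := hasFDerivAt_inv_norm_pow 3 hx
  have h5 := hasFDerivAt_inv_norm_pow 5 hx
  have hv := hasFDerivAt_inner_const_right v x
  have he := hasFDerivAt_inner_const_right e x
  rw [(fderiv_oseenField_apply_eventuallyEq e v hx).fderiv_eq, HasFDerivAt.fderiv ?deriv]
  case deriv =>
    exact ((((h3.mul hv).neg.smul_const e).add
      (((h3.mul_const ⟪e, v⟫).sub (((h5.const_mul 3).mul he).mul hv)).smul
        (hasFDerivAt_id x))).add ((h3.mul he).smul_const v)).const_smul (8 * π)⁻¹
  simp only [smul_apply, add_apply, neg_apply, sub_apply,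
    ContinuousLinearMap.smulRight_apply, innerSL_apply_apply, Pi.mul_apply, Pi.sub_apply,
    ContinuousLinearMap.id_apply, id, smul_eq_mul, Nat.cast_ofNat, real_inner_self_eq_norm_sq]
  module

theorem sum_fderiv_fderiv_oseenField [FiniteDimensional ℝ E] {ι : Type*} [Fintype ι]
    (b : OrthonormalBasis ι ℝ E) (e : E) {x : E} (hx : x ≠ 0) :
    ∑ i, fderiv ℝ (fderiv ℝ (oseenField e) · (b i)) x (b i) = (8 * π)⁻¹ •
      (((5 - Module.finrank ℝ E) * (‖x‖ ^ 3)⁻¹) • e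
        + (3 * (1 - Module.finrank ℝ E) * (‖x‖ ^ 5)⁻¹ * ⟪x, e⟫) • x) := by
  have hxx : ∑ i, ⟪x, b i⟫ ^ 2 = ‖x‖ ^ 2 := by
    simpa only [sq, real_inner_comm x, real_inner_self_eq_norm_sq] using b.sum_inner_mul_inner x x
  have hxe : ∑ i, ⟪x, b i⟫ * ⟪e, b i⟫ = ⟪x, e⟫ := by
    simpa only [real_inner_comm e] using b.sum_inner_mul_inner x e
  have hbb : ∑ i, ‖b i‖ ^ 2 = Module.finrank ℝ E := by
    simp [b.orthonormal.1, Module.finrank_eq_card_basis b.toBasis]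
  have hxb : ∑ i, ⟪x, b i⟫ • b i = x := by
    simpa only [real_inner_comm x] using b.sum_repr' x
  have heb : ∑ i, ⟪e, b i⟫ • b i = e := by
    simpa only [real_inner_comm e] using b.sum_repr' e
  simp only [fderiv_fderiv_oseenField_apply e _ hx, Finset.sum_add_distrib, Finset.sum_sub_distrib,
    ← Finset.smul_sum, ← Finset.sum_smul, ← Finset.mul_sum, hxx, hxe, hbb, hxb, heb]
  match_scalars <;> field_simp <;> ring

end InnerProductSpace

theorem oseenTensor_apply (y e : E3) : oseenTensor y e = oseenField e y := by
  simp [oseenTensor, oseenField, mul_smul]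

theorem hasGradientAt_inner_oseenPressure (e : E3) {x : E3} (hx : x ≠ 0) :
    HasGradientAt (⟪oseenPressure ·, e⟫)
      ((4 * π)⁻¹ • ((‖x‖ ^ 3)⁻¹ • e - (3 * (‖x‖ ^ 5)⁻¹ * ⟪x, e⟫) • x)) x := by
  have hp : (⟪oseenPressure ·, e⟫) = fun y => (4 * π)⁻¹ * ((‖y‖ ^ 3)⁻¹ * ⟪y, e⟫) := by
    funext y
    simp only [oseenPressure, mul_inv_rev, real_inner_smul_left]
    ring
  rw [hasGradientAt_iff_hasFDerivAt, hp]
  refine (((hasFDerivAt_inv_norm_pow 3 hx).mul (hasFDerivAt_inner_const_right e x)).const_mul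
    (4 * π)⁻¹).congr_fderiv (ContinuousLinearMap.ext fun v => ?_)
  simp only [add_apply, smul_apply, innerSL_apply_apply, smul_eq_mul,
    InnerProductSpace.toDual_apply_apply, inner_sub_left, real_inner_smul_left, Nat.cast_ofNat]
  ring

/-- `(Φ, P)` solves the homogeneous steady Stokes equations away from the
origin: for every `e ∈ ℝ³` and every nonzero `x`,
`−Δ(Φ(·)e)(x) + ∇(P(·)·e)(x) = 0`, where the (componentwise) Laplacian is the sum of the
second partial derivatives and `∇` is the gradient of the scalar map `y ↦ ⟪P(y), e⟫`. -/
theorem oseenTensor_pressure_stokes (e : E3) (x : E3) (hx : x ≠ 0) :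
    -(∑ i : Fin 3,
        fderiv ℝ (fun y : E3 =>
            fderiv ℝ (fun z : E3 => oseenTensor z e) y (EuclideanSpace.single i 1))
          x (EuclideanSpace.single i 1))
      + gradient (fun y : E3 => (inner ℝ (oseenPressure y) e : ℝ)) x = 0 := by
  have hΔ := sum_fderiv_fderiv_oseenField (EuclideanSpace.basisFun (Fin 3) ℝ) e hx
  simp only [EuclideanSpace.basisFun_apply, finrank_euclideanSpace_fin] at hΔ
  simp only [oseenTensor_apply, hΔ, (hasGradientAt_inner_oseenPressure e hx).gradient]
  module

end
end

section
/- Assume in addition that d_min ≤ 2W. Then there is a universal constant C > 0 such that for every x ∈ ℝ³: ‖∫_{ℝ³} (χ_{d_min}Φ)(x − T(y)) dμ(y)‖ ≤ C·(M·W³/d_min + M + 1), where the integral is the (matrix-valued) Lebesgue integral of y ↦ (χ_{d_min}Φ)(x − T(y)) against μ. -/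
open MeasureTheory
open scoped ENNReal NNReal

noncomputable section

/-- The truncated Oseen kernel `(χ_d Φ)(z) = χ(z/d) Φ(z)` (equal to `0` at `z = 0`,
since `χ` vanishes near the origin). -/
def truncOseen (χ : E3 → ℝ) (d : ℝ) (z : E3) : E3 →L[ℝ] E3 :=
  χ (d⁻¹ • z) • oseenTensor z

open Metric Real

/-! On the ball `B(p, 2W)` the cutoff gives `‖χ_d Φ‖ ≤ (π d)⁻¹`, and the ball has `μ`-mass at most
`M · (4π/3)(2W)³`. Off it, `‖T y - y‖ ≤ W ≤ ‖p - y‖ / 2`, so `‖Φ(p - T y)‖ ≤ ‖p - y‖⁻¹`; by the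
density bound and translation invariance, `∫ ‖p - y‖⁻¹ dμ ≤ M ∫_{B(0,1)} ‖z‖⁻¹ dz + 1`, which is
finite because `‖z‖⁻¹` is locally integrable in dimension three. -/

lemma norm_oseenTensor_le (z : E3) : ‖oseenTensor z‖ ≤ (4 * π)⁻¹ * ‖z‖⁻¹ := by
  have hP : ‖(innerSL ℝ z).smulRight z‖ = ‖z‖ ^ 2 := by
    rw [ContinuousLinearMap.norm_smulRight_apply, innerSL_apply_norm, sq]
  have hcube : (‖z‖ ^ 3)⁻¹ * ‖z‖ ^ 2 = ‖z‖⁻¹ := by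
    rcases eq_or_ne ‖z‖ 0 with h | h
    · simp [h]
    · field_simp
  calc ‖oseenTensor z‖
      ≤ (8 * π)⁻¹ * (‖z‖⁻¹ * ‖ContinuousLinearMap.id ℝ E3‖
          + (‖z‖ ^ 3)⁻¹ * ‖(innerSL ℝ z).smulRight z‖) := by
        rw [oseenTensor, norm_smul, Real.norm_of_nonneg (by positivity)]
        gcongr
        refine (norm_add_le _ _).trans_eq ?_
        rw [norm_smul, norm_smul, Real.norm_of_nonneg (by positivity),
          Real.norm_of_nonneg (by positivity)]
    _ ≤ (8 * π)⁻¹ * (‖z‖⁻¹ * 1 + ‖z‖⁻¹) := by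
        rw [hP, hcube]
        gcongr
        exact ContinuousLinearMap.norm_id_le
    _ = (4 * π)⁻¹ * ‖z‖⁻¹ := by field_simp; ring

lemma norm_truncOseen_le_norm_oseenTensor {χ : E3 → ℝ} (hχ : ∀ z, χ z ∈ Set.Icc (0 : ℝ) 1)
    (d : ℝ) (z : E3) : ‖truncOseen χ d z‖ ≤ ‖oseenTensor z‖ := by
  rw [truncOseen, norm_smul, Real.norm_of_nonneg (hχ _).1]
  exact mul_le_of_le_one_left (norm_nonneg _) (hχ _).2

lemma norm_truncOseen_le_inv_mul {χ : E3 → ℝ} (hχ : ∀ z, χ z ∈ Set.Icc (0 : ℝ) 1)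
    (hχ0 : ∀ z : E3, ‖z‖ ≤ 1 / 4 → χ z = 0) {d : ℝ} (hd : 0 < d) (z : E3) :
    ‖truncOseen χ d z‖ ≤ (π * d)⁻¹ := by
  rcases le_or_gt ‖d⁻¹ • z‖ (1 / 4) with hz | hz
  · rw [truncOseen, norm_smul, hχ0 _ hz, norm_zero, zero_mul]
    positivity
  rw [norm_smul, Real.norm_of_nonneg (by positivity), ← div_eq_inv_mul, lt_div_iff₀ hd] at hz
  calc ‖truncOseen χ d z‖ ≤ (4 * π)⁻¹ * ‖z‖⁻¹ :=
        (norm_truncOseen_le_norm_oseenTensor hχ d z).trans (norm_oseenTensor_le z)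
    _ ≤ (4 * π)⁻¹ * (1 / 4 * d)⁻¹ := by gcongr
    _ = (π * d)⁻¹ := by field_simp

lemma inv_norm_sub_le_two_mul_inv_norm {G : Type*} [NormedAddCommGroup G] {a b : G}
    (hb : ‖b‖ ≤ ‖a‖ / 2) : ‖a - b‖⁻¹ ≤ 2 * ‖a‖⁻¹ := by
  rcases eq_or_ne a 0 with rfl | ha
  · simp_all
  have : ‖a‖ / 2 ≤ ‖a - b‖ := by linarith [norm_sub_norm_le a b]
  calc ‖a - b‖⁻¹ ≤ (‖a‖ / 2)⁻¹ := inv_anti₀ (by positivity) this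
    _ = 2 * ‖a‖⁻¹ := by rw [inv_div, div_eq_mul_inv]

lemma norm_truncOseen_sub_le_inv_norm {χ : E3 → ℝ} (hχ : ∀ z, χ z ∈ Set.Icc (0 : ℝ) 1)
    (d : ℝ) {p y y' : E3} (h : ‖y' - y‖ ≤ ‖p - y‖ / 2) :
    ‖truncOseen χ d (p - y')‖ ≤ ‖p - y‖⁻¹ := by
  have hsub : p - y' = (p - y) - (y' - y) := by abel
  calc ‖truncOseen χ d (p - y')‖ ≤ (4 * π)⁻¹ * ‖p - y'‖⁻¹ :=
        (norm_truncOseen_le_norm_oseenTensor hχ d _).trans (norm_oseenTensor_le _)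
    _ ≤ (4 * π)⁻¹ * (2 * ‖p - y‖⁻¹) := by
        rw [hsub]; gcongr; exact inv_norm_sub_le_two_mul_inv_norm h
    _ ≤ ‖p - y‖⁻¹ := by
        rw [← mul_assoc]
        refine mul_le_of_le_one_left (by positivity) ?_
        rw [inv_mul_le_iff₀ (by positivity)]
        linarith [pi_gt_three]

section InverseNorm

variable {E : Type*} [NormedAddCommGroup E] [MeasurableSpace E] [BorelSpace E]

lemma lintegral_inv_norm_sub_le {μ ν : Measure E} [ν.IsAddRightInvariant] {c : ℝ≥0∞}
    (hμ : μ ≤ c • ν) (p : E) :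
    ∫⁻ y, ENNReal.ofReal ‖p - y‖⁻¹ ∂μ
      ≤ c * (∫⁻ z in ball 0 1, ENNReal.ofReal ‖z‖⁻¹ ∂ν) + μ Set.univ := by
  set g := (ball (0 : E) 1).indicator fun z => ENNReal.ofReal ‖z‖⁻¹
  have hg : ∀ y, ENNReal.ofReal ‖p - y‖⁻¹ ≤ g (y - p) + 1 := by
    intro y
    rw [norm_sub_rev]
    by_cases hy : y - p ∈ ball 0 1
    · simp only [g, Set.indicator_of_mem hy]
      exact le_self_add
    · rw [mem_ball_zero_iff, not_lt] at hy
      exact le_add_left (ENNReal.ofReal_le_one.2 (inv_le_one_of_one_le₀ hy))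
  calc ∫⁻ y, ENNReal.ofReal ‖p - y‖⁻¹ ∂μ ≤ ∫⁻ y, g (y - p) + 1 ∂μ := lintegral_mono hg
    _ = ∫⁻ y, g (y - p) ∂μ + μ Set.univ := by
        rw [lintegral_add_right _ measurable_const, lintegral_one]
    _ ≤ ∫⁻ y, g (y - p) ∂(c • ν) + μ Set.univ := by gcongr
    _ = c * (∫⁻ z in ball 0 1, ENNReal.ofReal ‖z‖⁻¹ ∂ν) + μ Set.univ := by
        rw [lintegral_smul_measure, lintegral_sub_right_eq_self g p,
          lintegral_indicator measurableSet_ball, smul_eq_mul]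

lemma lintegral_ball_inv_norm_lt_top [NormedSpace ℝ E] [FiniteDimensional ℝ E]
    (hE : 1 < Module.finrank ℝ E) (ν : Measure E) [ν.IsAddHaarMeasure] :
    ∫⁻ z in ball 0 1, ENNReal.ofReal ‖z‖⁻¹ ∂ν < ∞ := by
  have hint : IntegrableOn (fun z : E => ‖z‖⁻¹) (ball 0 1) ν := by
    refine integrableOn_ball_of_norm_le_rpow (C := 1) (α := 1) hE.le (by exact_mod_cast hE)
      (ae_of_all _ fun z => ?_) measurable_norm.inv.aestronglyMeasurable
    rw [Real.rpow_neg_one, one_mul, norm_inv, norm_norm]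
  exact hint.lintegral_lt_top

end InverseNorm

lemma setLIntegral_ball_norm_truncOseen_le {χ : E3 → ℝ} (hχ : ∀ z, χ z ∈ Set.Icc (0 : ℝ) 1)
    (hχ0 : ∀ z : E3, ‖z‖ ≤ 1 / 4 → χ z = 0) {μ : Measure E3} {M W d : ℝ} (hM : 0 ≤ M)
    (hW : 0 ≤ W) (hμ : μ ≤ ENNReal.ofReal M • volume) (hd : 0 < d) (T : E3 → E3) (p : E3) :
    ∫⁻ y in ball p (2 * W), ENNReal.ofReal ‖truncOseen χ d (p - T y)‖ ∂μ
      ≤ ENNReal.ofReal (32 / 3 * (M * W ^ 3 / d)) :=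
  calc ∫⁻ y in ball p (2 * W), ENNReal.ofReal ‖truncOseen χ d (p - T y)‖ ∂μ
      ≤ ∫⁻ _ in ball p (2 * W), ENNReal.ofReal (π * d)⁻¹ ∂μ :=
        lintegral_mono fun y => ENNReal.ofReal_le_ofReal (norm_truncOseen_le_inv_mul hχ hχ0 hd _)
    _ = ENNReal.ofReal (π * d)⁻¹ * μ (ball p (2 * W)) := setLIntegral_const _ _
    _ ≤ ENNReal.ofReal (π * d)⁻¹ * (ENNReal.ofReal M * volume (ball p (2 * W))) := by
        gcongr
        exact hμ _
    _ = ENNReal.ofReal (32 / 3 * (M * W ^ 3 / d)) := by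
        rw [EuclideanSpace.volume_ball_fin_three, ← ENNReal.ofReal_pow (by positivity),
          ← ENNReal.ofReal_mul (by positivity), ← ENNReal.ofReal_mul hM,
          ← ENNReal.ofReal_mul (by positivity)]
        congr 1
        field_simp
        ring

lemma setLIntegral_compl_ball_norm_truncOseen_le {χ : E3 → ℝ}
    (hχ : ∀ z, χ z ∈ Set.Icc (0 : ℝ) 1) {μ : Measure E3} {c : ℝ≥0∞} (hμ : μ ≤ c • volume)
    {T : E3 → E3} {W : ℝ} (hT : ∀ᵐ y ∂μ, ‖T y - y‖ ≤ W) (d : ℝ) (p : E3) :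
    ∫⁻ y in (ball p (2 * W))ᶜ, ENNReal.ofReal ‖truncOseen χ d (p - T y)‖ ∂μ
      ≤ c * (∫⁻ z in ball (0 : E3) 1, ENNReal.ofReal ‖z‖⁻¹) + μ Set.univ :=
  calc ∫⁻ y in (ball p (2 * W))ᶜ, ENNReal.ofReal ‖truncOseen χ d (p - T y)‖ ∂μ
      ≤ ∫⁻ y in (ball p (2 * W))ᶜ, ENNReal.ofReal ‖p - y‖⁻¹ ∂μ := by
        refine setLIntegral_mono_ae' measurableSet_ball.compl ?_
        filter_upwards [hT] with y hy hyB
        refine ENNReal.ofReal_le_ofReal (norm_truncOseen_sub_le_inv_norm hχ d ?_)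
        rw [Set.mem_compl_iff, mem_ball, dist_eq_norm, not_lt, norm_sub_rev] at hyB
        linarith
    _ ≤ ∫⁻ y, ENNReal.ofReal ‖p - y‖⁻¹ ∂μ := setLIntegral_le_lintegral _ _
    _ ≤ c * (∫⁻ z in ball (0 : E3) 1, ENNReal.ofReal ‖z‖⁻¹) + μ Set.univ :=
        lintegral_inv_norm_sub_le hμ p

lemma lintegral_norm_truncOseen_le {χ : E3 → ℝ} (hχ : ∀ z, χ z ∈ Set.Icc (0 : ℝ) 1)
    (hχ0 : ∀ z : E3, ‖z‖ ≤ 1 / 4 → χ z = 0) {μ : Measure E3} [IsProbabilityMeasure μ]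
    {T : E3 → E3} {M W d : ℝ} (hM : 0 ≤ M) (hW : 0 ≤ W) (hμ : μ ≤ ENNReal.ofReal M • volume)
    (hT : ∀ᵐ y ∂μ, ‖T y - y‖ ≤ W) (hd : 0 < d) (p : E3) :
    ∫⁻ y, ENNReal.ofReal ‖truncOseen χ d (p - T y)‖ ∂μ
      ≤ ENNReal.ofReal (32 / 3 * (M * W ^ 3 / d)
          + M * (∫⁻ z in ball (0 : E3) 1, ENNReal.ofReal ‖z‖⁻¹).toReal + 1) := by
  have hK : ∫⁻ z in ball (0 : E3) 1, ENNReal.ofReal ‖z‖⁻¹ ≠ ∞ :=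
    (lintegral_ball_inv_norm_lt_top (by simp) volume).ne
  rw [← lintegral_add_compl _ (measurableSet_ball (x := p) (ε := 2 * W)),
    ENNReal.ofReal_add (by positivity) zero_le_one,
    ENNReal.ofReal_add (by positivity) (by positivity), ENNReal.ofReal_mul hM,
    ENNReal.ofReal_toReal hK, ENNReal.ofReal_one, add_assoc, ← measure_univ (μ := μ)]
  exact add_le_add (setLIntegral_ball_norm_truncOseen_le hχ hχ0 hM hW hμ hd T p)
    (setLIntegral_compl_ball_norm_truncOseen_le hχ hμ hT d p)

/-- there is a universal constant `C > 0` such that, in the transport setting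
(probability measure `μ` with density bounded by `M`, a.e. displacement at most `W`,
pushforward equal to the empirical measure of points with positive minimal distance
`d_min ≤ 2W`), for every `x ∈ ℝ³`,
`‖∫ (χ_{d_min}Φ)(x − T(y)) dμ(y)‖ ≤ C (M W³/d_min + M + 1)`. -/
theorem truncated_convolution_bound :
    ∃ C : ℝ, 0 < C ∧
      ∀ (χ : E3 → ℝ),
        (∀ z : E3, χ z ∈ Set.Icc (0 : ℝ) 1) →
        (∀ z : E3, ‖z‖ ≤ 1 / 4 → χ z = 0) →
        (∀ z : E3, 1 / 2 ≤ ‖z‖ → χ z = 1) →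
      ∀ (N : ℕ) (M W : ℝ) (μ : Measure E3) (T : E3 → E3) (x : Fin N → E3) (dmin : ℝ),
        2 ≤ N → 0 < M → 0 < W →
        IsProbabilityMeasure μ →
        (∀ A : Set E3, μ A ≤ ENNReal.ofReal M * volume A) →
        Measurable T →
        (∀ᵐ y ∂μ, ‖T y - y‖ ≤ W) →
        μ.map T = (N : ℝ≥0∞)⁻¹ • ∑ j : Fin N, Measure.dirac (x j) →
        dmin = sInf {d : ℝ | ∃ i j : Fin N, i ≠ j ∧ d = ‖x i - x j‖} →
        0 < dmin → dmin ≤ 2 * W →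
        ∀ p : E3,
          ‖∫ y, truncOseen χ dmin (p - T y) ∂μ‖ ≤ C * (M * W ^ 3 / dmin + M + 1) := by
  set K := (∫⁻ z in ball (0 : E3) 1, ENNReal.ofReal ‖z‖⁻¹).toReal
  have hK : 0 ≤ K := ENNReal.toReal_nonneg
  refine ⟨11 + K, by positivity, ?_⟩
  intro χ hχ hχ0 _ N M W μ T x dmin _ hM hW _ hdens _ hdisp _ _ hd _ p
  have hbound :=
    lintegral_norm_truncOseen_le hχ hχ0 hM.le hW.le (Measure.le_iff'.2 hdens) hdisp hd p
  have hWd : 0 ≤ M * W ^ 3 / dmin := by positivity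
  calc ‖∫ y, truncOseen χ dmin (p - T y) ∂μ‖
      ≤ (∫⁻ y, ENNReal.ofReal ‖truncOseen χ dmin (p - T y)‖ ∂μ).toReal :=
        norm_integral_le_lintegral_norm _
    _ ≤ 32 / 3 * (M * W ^ 3 / dmin) + M * K + 1 :=
        ENNReal.toReal_le_of_le_ofReal (by positivity) hbound
    _ ≤ (11 + K) * (M * W ^ 3 / dmin + M + 1) := by nlinarith
end
end

section
/- Let ρ : ℝ³ → ℝ be a measurable function belonging to L¹(ℝ³) ∩ L^∞(ℝ³) and let g₀ ∈ ℝ³ be a fixed vector. Then the Oseen convolution v(x) := ∫_{ℝ³} Φ(x − y)·g₀·ρ(y) dy is well defined for every x ∈ ℝ³ (the integrand is absolutely integrable), and v is Lipschitz continuous: there is a universal constant C > 0 such that ‖v(x) − v(x')‖ ≤ C·‖g₀‖·(‖ρ‖_{L¹} + ‖ρ‖_{L^∞})·‖x − x'‖ for all x, x' ∈ ℝ³. -/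
/-!
The Oseen kernel satisfies `‖Φ(z) g‖ ≤ ‖g‖ / ‖z‖` and, whenever `2 ‖a - b‖ ≤ ‖a‖`,
`‖Φ(a) g - Φ(b) g‖ ≤ ‖g‖ ‖a - b‖ / ‖a‖²` (write `Φ(z) g` through the unit vector `z / ‖z‖`).
In dimension `d`, `‖z‖⁻ᵏ` is integrable on balls for `k < d` and its integral over `ball 0 r`
scales like `r ^ (d - k)`; splitting at the unit ball, `∫ |ρ y| ‖x - y‖⁻ᵏ dy` is bounded by
`‖ρ‖_∞ ∫_{ball 0 1} ‖z‖⁻ᵏ + ‖ρ‖₁`. This gives integrability and a uniform bound on the convolution.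
For `h = ‖x - x'‖ ≤ 1/3`, split at `ball x (2h)`: inside it both kernels are bounded separately,
contributing `O(h ^ (d - k))`; outside it the difference estimate applies and contributes
`h ∫ |ρ y| ‖x - y‖⁻⁽ᵏ⁺¹⁾ dy = O(h)`. For larger `h` the uniform bound suffices.
-/

open MeasureTheory

noncomputable section

open Metric Set Module
open scoped RealInnerProductSpace

lemma MeasureTheory.MemLp.ae_norm_le_toReal_eLpNorm_top {α G : Type*} [MeasurableSpace α]
    {μ : Measure α} [NormedAddCommGroup G] {f : α → G} (hf : MemLp f ⊤ μ) :
    ∀ᵐ y ∂μ, ‖f y‖ ≤ (eLpNorm f ⊤ μ).toReal := by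
  filter_upwards [ae_le_eLpNormEssSup (f := f) (μ := μ)] with y hy
  rw [eLpNorm_exponent_top, ← toReal_enorm]
  exact ENNReal.toReal_mono (eLpNorm_exponent_top (f := f) ▸ hf.2.ne) hy

section NormedGroup

variable {V F : Type*} [NormedAddCommGroup V] [NormedAddCommGroup F] [NormedSpace ℝ F]

lemma abs_inv_norm_sub_inv_norm_le {a b : V} (ha : a ≠ 0) (hb : b ≠ 0) :
    |‖a‖⁻¹ - ‖b‖⁻¹| ≤ ‖a‖⁻¹ * ‖b‖⁻¹ * ‖a - b‖ := by
  have ha' := norm_pos_iff.2 ha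
  have hb' := norm_pos_iff.2 hb
  have h : ‖a‖⁻¹ - ‖b‖⁻¹ = (‖a‖⁻¹ * ‖b‖⁻¹) * (‖b‖ - ‖a‖) := by field_simp
  rw [h, abs_mul, abs_of_pos (by positivity), abs_sub_comm]
  gcongr
  exact abs_norm_sub_norm_le a b

lemma indicator_ball_comp_sub_left {β : Type*} [Zero β] (g : V → β) (c : V) (r : ℝ) :
    (ball c r).indicator (fun y => g (c - y)) = fun y => (ball 0 r).indicator g (c - y) := by
  ext y
  simp only [indicator, mem_ball, dist_eq_norm, sub_zero, norm_sub_rev y c]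

def truncatedInvNormPow (k : ℕ) (c : V) (r : ℝ) : V → ℝ :=
  (ball c r).indicator fun y => (‖c - y‖ ^ k)⁻¹

lemma truncatedInvNormPow_nonneg (k : ℕ) (c : V) (r : ℝ) (y : V) :
    0 ≤ truncatedInvNormPow k c r y :=
  indicator_nonneg (fun _ _ => by positivity) y

lemma abs_mul_inv_norm_sub_pow_le {k : ℕ} {t N : ℝ} (ht : |t| ≤ N) (x y : V) :
    |t| * (‖x - y‖ ^ k)⁻¹ ≤ N * truncatedInvNormPow k x 1 y + |t| := by
  by_cases hy : y ∈ ball x 1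
  · rw [truncatedInvNormPow, indicator_of_mem hy]
    have := mul_le_mul_of_nonneg_right ht (by positivity : (0 : ℝ) ≤ (‖x - y‖ ^ k)⁻¹)
    linarith [abs_nonneg t]
  · have h1 : 1 ≤ ‖x - y‖ := by rwa [mem_ball, not_lt, dist_comm, dist_eq_norm] at hy
    rw [truncatedInvNormPow, indicator_of_notMem hy, mul_zero, zero_add]
    exact mul_le_of_le_one_right (abs_nonneg t) (inv_le_one_of_one_le₀ (one_le_pow₀ h1))

variable {K : V → F} {k : ℕ} {A : ℝ}

lemma norm_smul_comp_sub_le (hKA : ∀ z, ‖K z‖ ≤ A * (‖z‖ ^ k)⁻¹) (t : ℝ) (x y : V) :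
    ‖t • K (x - y)‖ ≤ A * (|t| * (‖x - y‖ ^ k)⁻¹) := by
  rw [norm_smul, Real.norm_eq_abs, mul_left_comm]
  exact mul_le_mul_of_nonneg_left (hKA _) (abs_nonneg t)

lemma norm_smul_comp_sub_sub_le (hA : 0 ≤ A) (hKA : ∀ z, ‖K z‖ ≤ A * (‖z‖ ^ k)⁻¹)
    (hKB : ∀ a b, 2 * ‖a - b‖ ≤ ‖a‖ → ‖K a - K b‖ ≤ A * (‖a‖ ^ (k + 1))⁻¹ * ‖a - b‖)
    {t N : ℝ} (ht : |t| ≤ N) (x x' y : V) :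
    ‖t • K (x - y) - t • K (x' - y)‖ ≤
      N * A * (truncatedInvNormPow k x (2 * ‖x - x'‖) y +
        truncatedInvNormPow k x' (3 * ‖x - x'‖) y) +
      A * ‖x - x'‖ * (|t| * (‖x - y‖ ^ (k + 1))⁻¹) := by
  have hN : 0 ≤ N := (abs_nonneg t).trans ht
  have hnear : 0 ≤ N * A * (truncatedInvNormPow k x (2 * ‖x - x'‖) y +
      truncatedInvNormPow k x' (3 * ‖x - x'‖) y) :=
    mul_nonneg (mul_nonneg hN hA)
      (add_nonneg (truncatedInvNormPow_nonneg _ _ _ _) (truncatedInvNormPow_nonneg _ _ _ _))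
  rw [← smul_sub, norm_smul, Real.norm_eq_abs]
  by_cases hy : y ∈ ball x (2 * ‖x - x'‖)
  · have hy' : y ∈ ball x' (3 * ‖x - x'‖) := by
      rw [mem_ball] at hy ⊢
      linarith [dist_triangle y x x', dist_eq_norm x x']
    calc |t| * ‖K (x - y) - K (x' - y)‖
        ≤ N * (A * (‖x - y‖ ^ k)⁻¹ + A * (‖x' - y‖ ^ k)⁻¹) :=
          mul_le_mul ht (norm_sub_le_of_le (hKA _) (hKA _)) (norm_nonneg _) hN
      _ = N * A * (truncatedInvNormPow k x (2 * ‖x - x'‖) y +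
            truncatedInvNormPow k x' (3 * ‖x - x'‖) y) := by
          simp only [truncatedInvNormPow, indicator_of_mem hy, indicator_of_mem hy']; ring
      _ ≤ _ := le_add_of_nonneg_right (by positivity)
  · have hfar : 2 * ‖(x - y) - (x' - y)‖ ≤ ‖x - y‖ := by
      rw [sub_sub_sub_cancel_right, ← dist_eq_norm x y, dist_comm]
      exact not_lt.1 hy
    calc |t| * ‖K (x - y) - K (x' - y)‖
        ≤ |t| * (A * (‖x - y‖ ^ (k + 1))⁻¹ * ‖x - x'‖) := by
          gcongr
          simpa only [sub_sub_sub_cancel_right] using hKB _ _ hfar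
      _ = A * ‖x - x'‖ * (|t| * (‖x - y‖ ^ (k + 1))⁻¹) := by ring
      _ ≤ _ := le_add_of_nonneg_left hnear

end NormedGroup

section Normalize

variable {V : Type*} [NormedAddCommGroup V] [NormedSpace ℝ V]

lemma norm_normalize_le (x : V) : ‖NormedSpace.normalize x‖ ≤ 1 := by
  rcases eq_or_ne x 0 with rfl | hx
  · simp
  · exact (NormedSpace.norm_normalize hx).le

lemma norm_normalize_sub_normalize_le {a : V} (ha : a ≠ 0) (b : V) :
    ‖NormedSpace.normalize a - NormedSpace.normalize b‖ ≤ 2 * ‖a‖⁻¹ * ‖a - b‖ := by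
  have hsplit : NormedSpace.normalize a - NormedSpace.normalize b =
      ‖a‖⁻¹ • (a - b) + (‖a‖⁻¹ - ‖b‖⁻¹) • b := by
    simp only [NormedSpace.normalize]; module
  have hb : ‖(‖a‖⁻¹ - ‖b‖⁻¹) • b‖ ≤ ‖a‖⁻¹ * ‖a - b‖ := by
    rcases eq_or_ne b 0 with rfl | hb
    · simp only [smul_zero, norm_zero]; positivity
    calc ‖(‖a‖⁻¹ - ‖b‖⁻¹) • b‖ ≤ ‖a‖⁻¹ * ‖b‖⁻¹ * ‖a - b‖ * ‖b‖ := by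
          rw [norm_smul, Real.norm_eq_abs]; gcongr; exact abs_inv_norm_sub_inv_norm_le ha hb
      _ = ‖a‖⁻¹ * ‖a - b‖ := by field_simp
  calc _ ≤ ‖a‖⁻¹ * ‖a - b‖ + ‖a‖⁻¹ * ‖a - b‖ := by
        rw [hsplit]
        refine norm_add_le_of_le ?_ hb
        rw [norm_smul, norm_inv, norm_norm]
    _ = 2 * ‖a‖⁻¹ * ‖a - b‖ := by ring

end Normalize

section RankOne

variable {V : Type*} [NormedAddCommGroup V] [InnerProductSpace ℝ V]

lemma norm_add_inner_smul_le {p : V} (hp : ‖p‖ ≤ 1) (g : V) : ‖g + ⟪p, g⟫ • p‖ ≤ 2 * ‖g‖ :=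
  calc ‖g + ⟪p, g⟫ • p‖ ≤ ‖g‖ + ‖p‖ * ‖g‖ * ‖p‖ := by
        refine norm_add_le_of_le le_rfl ?_
        rw [norm_smul, Real.norm_eq_abs]
        gcongr
        exact abs_real_inner_le_norm p g
    _ ≤ ‖g‖ + 1 * ‖g‖ * 1 := by gcongr
    _ = 2 * ‖g‖ := by ring

lemma norm_inner_smul_sub_inner_smul_le {p q : V} (hp : ‖p‖ ≤ 1) (hq : ‖q‖ ≤ 1) (g : V) :
    ‖⟪p, g⟫ • p - ⟪q, g⟫ • q‖ ≤ 2 * ‖g‖ * ‖p - q‖ := by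
  have hsplit : ⟪p, g⟫ • p - ⟪q, g⟫ • q = ⟪p - q, g⟫ • p + ⟪q, g⟫ • (p - q) := by
    rw [inner_sub_left]; module
  calc _ ≤ ‖p - q‖ * ‖g‖ * ‖p‖ + ‖q‖ * ‖g‖ * ‖p - q‖ := by
        rw [hsplit]
        refine norm_add_le_of_le ?_ ?_ <;> rw [norm_smul, Real.norm_eq_abs] <;> gcongr <;>
          exact abs_real_inner_le_norm _ g
    _ ≤ ‖p - q‖ * ‖g‖ * 1 + 1 * ‖g‖ * ‖p - q‖ := by gcongr
    _ = 2 * ‖g‖ * ‖p - q‖ := by ring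

end RankOne

section HaarMeasure

variable {E F : Type*} [NormedAddCommGroup E] [MeasurableSpace E] (μ : Measure E)

def unitBallIntegralInvNormPow (k : ℕ) : ℝ := ∫ z in ball (0 : E) 1, (‖z‖ ^ k)⁻¹ ∂μ

lemma unitBallIntegralInvNormPow_nonneg [OpensMeasurableSpace E] (k : ℕ) :
    0 ≤ unitBallIntegralInvNormPow μ k :=
  setIntegral_nonneg measurableSet_ball fun _ _ => by positivity

variable [NormedSpace ℝ E] [BorelSpace E] [FiniteDimensional ℝ E] [μ.IsAddHaarMeasure]
  [NormedAddCommGroup F] [NormedSpace ℝ F]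

lemma integrableOn_ball_inv_norm_pow {k : ℕ} (hk : k < finrank ℝ E) (r : ℝ) :
    IntegrableOn (fun z : E => (‖z‖ ^ k)⁻¹) (ball 0 r) μ := by
  refine integrableOn_ball_of_norm_le_rpow (C := 1) (α := k) (by omega) (by exact_mod_cast hk)
    (ae_of_all _ fun z => ?_) (by fun_prop)
  rw [one_mul, Real.rpow_neg (norm_nonneg z), Real.rpow_natCast,
    Real.norm_of_nonneg (by positivity)]

lemma setIntegral_ball_inv_norm_pow {k : ℕ} (hk : k ≤ finrank ℝ E) {r : ℝ} (hr : 0 < r) :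
    ∫ z in ball (0 : E) r, (‖z‖ ^ k)⁻¹ ∂μ =
      r ^ (finrank ℝ E - k) * unitBallIntegralInvNormPow μ k := by
  have h := Measure.setIntegral_comp_smul_of_pos μ (fun z : E => (‖z‖ ^ k)⁻¹) (ball 0 1) hr
  simp only [norm_smul, Real.norm_of_nonneg hr.le, mul_pow, mul_inv, smul_unitBall_of_pos hr,
    smul_eq_mul, integral_const_mul] at h
  rw [unitBallIntegralInvNormPow, pow_sub₀ _ hr.ne' hk]
  field_simp at h ⊢
  linear_combination -h

lemma integrable_truncatedInvNormPow {k : ℕ} (hk : k < finrank ℝ E) (c : E) (r : ℝ) :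
    Integrable (truncatedInvNormPow k c r) μ := by
  rw [truncatedInvNormPow, indicator_ball_comp_sub_left (fun z => (‖z‖ ^ k)⁻¹)]
  exact ((integrable_indicator_iff measurableSet_ball).2
    (integrableOn_ball_inv_norm_pow μ hk r)).comp_sub_left c

lemma integral_truncatedInvNormPow {k : ℕ} (hk : k ≤ finrank ℝ E) (c : E) {r : ℝ} (hr : 0 < r) :
    ∫ y, truncatedInvNormPow k c r y ∂μ =
      r ^ (finrank ℝ E - k) * unitBallIntegralInvNormPow μ k := by
  rw [truncatedInvNormPow, indicator_ball_comp_sub_left (fun z => (‖z‖ ^ k)⁻¹),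
    integral_sub_left_eq_self (fun z => (ball 0 r).indicator (fun z : E => (‖z‖ ^ k)⁻¹) z) μ c,
    integral_indicator measurableSet_ball, setIntegral_ball_inv_norm_pow μ hk hr]

lemma integral_truncatedInvNormPow_le {k : ℕ} (hk : k < finrank ℝ E) (c : E) {r : ℝ}
    (hr₀ : 0 < r) (hr₁ : r ≤ 1) :
    ∫ y, truncatedInvNormPow k c r y ∂μ ≤ r * unitBallIntegralInvNormPow μ k := by
  rw [integral_truncatedInvNormPow μ hk.le c hr₀]
  have := unitBallIntegralInvNormPow_nonneg μ k
  gcongr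
  exact pow_le_of_le_one hr₀.le hr₁ (by omega)

variable {ρ : E → ℝ} {N : ℝ}

lemma integrable_abs_mul_inv_norm_sub_pow {k : ℕ} (hk : k < finrank ℝ E) (hρ : Integrable ρ μ)
    (hN : ∀ᵐ y ∂μ, |ρ y| ≤ N) (x : E) :
    Integrable (fun y => |ρ y| * (‖x - y‖ ^ k)⁻¹) μ :=
  (((integrable_truncatedInvNormPow μ hk x 1).const_mul N).add hρ.abs).mono'
    (hρ.abs.aestronglyMeasurable.mul (by fun_prop))
    (hN.mono fun y hy => by
      rw [Real.norm_of_nonneg (by positivity)]; exact abs_mul_inv_norm_sub_pow_le hy x y)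

lemma integral_abs_mul_inv_norm_sub_pow_le {k : ℕ} (hk : k < finrank ℝ E) (hρ : Integrable ρ μ)
    (hN : ∀ᵐ y ∂μ, |ρ y| ≤ N) (x : E) :
    ∫ y, |ρ y| * (‖x - y‖ ^ k)⁻¹ ∂μ ≤ N * unitBallIntegralInvNormPow μ k + ∫ y, |ρ y| ∂μ := by
  have htrunc := integrable_truncatedInvNormPow μ hk x 1
  calc ∫ y, |ρ y| * (‖x - y‖ ^ k)⁻¹ ∂μ
      ≤ ∫ y, (N * truncatedInvNormPow k x 1 y + |ρ y|) ∂μ :=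
        integral_mono_of_nonneg (ae_of_all _ fun y => by positivity)
          ((htrunc.const_mul N).add hρ.abs)
          (hN.mono fun y hy => abs_mul_inv_norm_sub_pow_le hy x y)
    _ = N * unitBallIntegralInvNormPow μ k + ∫ y, |ρ y| ∂μ := by
        rw [integral_add (htrunc.const_mul N) hρ.abs, integral_const_mul,
          integral_truncatedInvNormPow μ hk.le x one_pos, one_pow, one_mul]

variable {K : E → F} {k : ℕ} {A : ℝ}

lemma integrable_smul_comp_sub (hK : StronglyMeasurable K) (hk : k < finrank ℝ E)
    (hKA : ∀ z, ‖K z‖ ≤ A * (‖z‖ ^ k)⁻¹) (hρ : Integrable ρ μ) (hN : ∀ᵐ y ∂μ, |ρ y| ≤ N)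
    (x : E) : Integrable (fun y => ρ y • K (x - y)) μ :=
  ((integrable_abs_mul_inv_norm_sub_pow μ hk hρ hN x).const_mul A).mono'
    (hρ.aestronglyMeasurable.smul
      (hK.comp_measurable (measurable_const.sub measurable_id)).aestronglyMeasurable)
    (ae_of_all _ fun y => norm_smul_comp_sub_le hKA (ρ y) x y)

lemma norm_integral_smul_comp_sub_le (hk : k < finrank ℝ E) (hA : 0 ≤ A)
    (hKA : ∀ z, ‖K z‖ ≤ A * (‖z‖ ^ k)⁻¹) (hρ : Integrable ρ μ) (hN : ∀ᵐ y ∂μ, |ρ y| ≤ N)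
    (x : E) :
    ‖∫ y, ρ y • K (x - y) ∂μ‖ ≤
      A * (N * unitBallIntegralInvNormPow μ k + ∫ y, |ρ y| ∂μ) :=
  calc ‖∫ y, ρ y • K (x - y) ∂μ‖ ≤ ∫ y, A * (|ρ y| * (‖x - y‖ ^ k)⁻¹) ∂μ :=
        norm_integral_le_of_norm_le ((integrable_abs_mul_inv_norm_sub_pow μ hk hρ hN x).const_mul A)
          (ae_of_all _ fun y => norm_smul_comp_sub_le hKA (ρ y) x y)
    _ ≤ A * (N * unitBallIntegralInvNormPow μ k + ∫ y, |ρ y| ∂μ) := by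
        rw [integral_const_mul]
        exact mul_le_mul_of_nonneg_left (integral_abs_mul_inv_norm_sub_pow_le μ hk hρ hN x) hA

lemma norm_integral_smul_comp_sub_sub_le_of_small (hK : StronglyMeasurable K)
    (hk : k + 1 < finrank ℝ E) (hA : 0 ≤ A) (hKA : ∀ z, ‖K z‖ ≤ A * (‖z‖ ^ k)⁻¹)
    (hKB : ∀ a b, 2 * ‖a - b‖ ≤ ‖a‖ → ‖K a - K b‖ ≤ A * (‖a‖ ^ (k + 1))⁻¹ * ‖a - b‖)
    (hρ : Integrable ρ μ) (hN : ∀ᵐ y ∂μ, |ρ y| ≤ N) {x x' : E} (hxx' : 3 * ‖x - x'‖ ≤ 1) :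
    ‖∫ y, ρ y • K (x - y) ∂μ - ∫ y, ρ y • K (x' - y) ∂μ‖ ≤
      A * (5 * N * unitBallIntegralInvNormPow μ k +
        N * unitBallIntegralInvNormPow μ (k + 1) + ∫ y, |ρ y| ∂μ) * ‖x - x'‖ := by
  rcases eq_or_ne x x' with rfl | hne
  · simp
  set h := ‖x - x'‖
  have hpos : 0 < h := norm_pos_iff.2 (sub_ne_zero.2 hne)
  have hN0 : 0 ≤ N := let ⟨y, hy⟩ := hN.exists; (abs_nonneg _).trans hy
  set near : E → ℝ := fun y =>
    truncatedInvNormPow k x (2 * h) y + truncatedInvNormPow k x' (3 * h) y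
  set far : E → ℝ := fun y => |ρ y| * (‖x - y‖ ^ (k + 1))⁻¹
  have hnear_int : Integrable near μ :=
    (integrable_truncatedInvNormPow μ (by omega) x _).add
      (integrable_truncatedInvNormPow μ (by omega) x' _)
  have hfar_int : Integrable far μ := integrable_abs_mul_inv_norm_sub_pow μ hk hρ hN x
  calc ‖∫ y, ρ y • K (x - y) ∂μ - ∫ y, ρ y • K (x' - y) ∂μ‖
      = ‖∫ y, (ρ y • K (x - y) - ρ y • K (x' - y)) ∂μ‖ := by
        rw [integral_sub (integrable_smul_comp_sub μ hK (by omega) hKA hρ hN x)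
          (integrable_smul_comp_sub μ hK (by omega) hKA hρ hN x')]
    _ ≤ ∫ y, (N * A * near y + A * h * far y) ∂μ :=
        norm_integral_le_of_norm_le ((hnear_int.const_mul _).add (hfar_int.const_mul _))
          (hN.mono fun y hy => norm_smul_comp_sub_sub_le hA hKA hKB hy x x' y)
    _ = N * A * ∫ y, near y ∂μ + A * h * ∫ y, far y ∂μ := by
        rw [integral_add (hnear_int.const_mul _) (hfar_int.const_mul _), integral_const_mul,
          integral_const_mul]
    _ ≤ N * A * (2 * h * unitBallIntegralInvNormPow μ k + 3 * h * unitBallIntegralInvNormPow μ k) +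
          A * h * (N * unitBallIntegralInvNormPow μ (k + 1) + ∫ y, |ρ y| ∂μ) := by
        gcongr
        · rw [integral_add (integrable_truncatedInvNormPow μ (by omega) x _)
            (integrable_truncatedInvNormPow μ (by omega) x' _)]
          exact add_le_add
            (integral_truncatedInvNormPow_le μ (by omega) x (by positivity) (by linarith))
            (integral_truncatedInvNormPow_le μ (by omega) x' (by positivity) hxx')
        · exact integral_abs_mul_inv_norm_sub_pow_le μ hk hρ hN x
    _ = _ := by ring

theorem norm_integral_smul_comp_sub_sub_le (hK : StronglyMeasurable K)
    (hk : k + 1 < finrank ℝ E) (hA : 0 ≤ A) (hKA : ∀ z, ‖K z‖ ≤ A * (‖z‖ ^ k)⁻¹)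
    (hKB : ∀ a b, 2 * ‖a - b‖ ≤ ‖a‖ → ‖K a - K b‖ ≤ A * (‖a‖ ^ (k + 1))⁻¹ * ‖a - b‖)
    (hρ : Integrable ρ μ) (hN : ∀ᵐ y ∂μ, |ρ y| ≤ N) (x x' : E) :
    ‖∫ y, ρ y • K (x - y) ∂μ - ∫ y, ρ y • K (x' - y) ∂μ‖ ≤
      6 * (unitBallIntegralInvNormPow μ k + unitBallIntegralInvNormPow μ (k + 1) + 1) * A *
        ((∫ y, |ρ y| ∂μ) + N) * ‖x - x'‖ := by
  have hN0 : 0 ≤ N := let ⟨y, hy⟩ := hN.exists; (abs_nonneg _).trans hy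
  have hI : 0 ≤ ∫ y, |ρ y| ∂μ := integral_nonneg fun y => abs_nonneg _
  have hc := unitBallIntegralInvNormPow_nonneg μ k
  have hc' := unitBallIntegralInvNormPow_nonneg μ (k + 1)
  rcases le_or_gt (3 * ‖x - x'‖) 1 with hsmall | hlarge
  · refine (norm_integral_smul_comp_sub_sub_le_of_small μ hK hk hA hKA hKB hρ hN hsmall).trans ?_
    have : 5 * N * unitBallIntegralInvNormPow μ k + N * unitBallIntegralInvNormPow μ (k + 1) +
        ∫ y, |ρ y| ∂μ ≤ 6 * (unitBallIntegralInvNormPow μ k +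
          unitBallIntegralInvNormPow μ (k + 1) + 1) * ((∫ y, |ρ y| ∂μ) + N) := by
      nlinarith [mul_nonneg hc hI, mul_nonneg hc' hI]
    calc _ ≤ A * (6 * (unitBallIntegralInvNormPow μ k +
          unitBallIntegralInvNormPow μ (k + 1) + 1) * ((∫ y, |ρ y| ∂μ) + N)) * ‖x - x'‖ := by
          gcongr
      _ = _ := by ring
  · have hv := norm_integral_smul_comp_sub_le μ (by omega) hA hKA hρ hN
    have : N * unitBallIntegralInvNormPow μ k + ∫ y, |ρ y| ∂μ ≤
        (unitBallIntegralInvNormPow μ k + unitBallIntegralInvNormPow μ (k + 1) + 1) *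
          ((∫ y, |ρ y| ∂μ) + N) := by
      nlinarith [mul_nonneg hc hI, mul_nonneg hc' hI, mul_nonneg hc' hN0]
    calc _ ≤ ‖∫ y, ρ y • K (x - y) ∂μ‖ + ‖∫ y, ρ y • K (x' - y) ∂μ‖ := norm_sub_le _ _
      _ ≤ 2 * (A * (N * unitBallIntegralInvNormPow μ k + ∫ y, |ρ y| ∂μ)) := by
          linarith [hv x, hv x']
      _ ≤ 2 * (A * ((unitBallIntegralInvNormPow μ k + unitBallIntegralInvNormPow μ (k + 1) + 1) *
            ((∫ y, |ρ y| ∂μ) + N))) * (3 * ‖x - x'‖) := by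
          rw [← mul_one (2 * (A * (N * _ + _)))]
          gcongr
      _ = _ := by ring

end HaarMeasure

lemma oseenTensor_apply_s16 (z g : E3) : oseenTensor z g =
    ((8 * Real.pi)⁻¹ * ‖z‖⁻¹) • (g + ⟪NormedSpace.normalize z, g⟫ • NormedSpace.normalize z) := by
  simp only [oseenTensor, NormedSpace.normalize, smul_apply, add_apply,
    ContinuousLinearMap.id_apply, ContinuousLinearMap.smulRight_apply, innerSL_apply_apply,
    real_inner_smul_left]
  module

lemma measurable_oseenTensor_apply (g : E3) : Measurable fun z => oseenTensor z g := by
  simp only [oseenTensor_apply_s16, NormedSpace.normalize]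
  fun_prop

lemma norm_oseenTensor_apply_le (z g : E3) : ‖oseenTensor z g‖ ≤ ‖g‖ * ‖z‖⁻¹ := by
  have hπ : (8 * Real.pi)⁻¹ * 2 ≤ 1 := by
    rw [inv_mul_le_iff₀ (by positivity)]; linarith [Real.pi_gt_three]
  rw [oseenTensor_apply_s16, norm_smul, Real.norm_of_nonneg (by positivity)]
  calc (8 * Real.pi)⁻¹ * ‖z‖⁻¹ * ‖g + ⟪NormedSpace.normalize z, g⟫ • NormedSpace.normalize z‖
      ≤ (8 * Real.pi)⁻¹ * ‖z‖⁻¹ * (2 * ‖g‖) := by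
        gcongr; exact norm_add_inner_smul_le (norm_normalize_le z) g
    _ = ((8 * Real.pi)⁻¹ * 2) * (‖g‖ * ‖z‖⁻¹) := by ring
    _ ≤ ‖g‖ * ‖z‖⁻¹ := mul_le_of_le_one_left (by positivity) hπ

lemma norm_oseenTensor_apply_sub_le {a b : E3} (hab : 2 * ‖a - b‖ ≤ ‖a‖) (g : E3) :
    ‖oseenTensor a g - oseenTensor b g‖ ≤ ‖g‖ * (‖a‖ ^ 2)⁻¹ * ‖a - b‖ := by
  rcases eq_or_ne a 0 with rfl | ha
  · obtain rfl : b = 0 :=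
      norm_le_zero_iff.1 (by rw [zero_sub, norm_neg, norm_zero] at hab; linarith)
    simp
  have hb : ‖a‖ / 2 ≤ ‖b‖ := by linarith [norm_sub_norm_le a b]
  have hb0 : b ≠ 0 := norm_pos_iff.1 (by linarith [norm_pos_iff.2 ha])
  set s := ‖a‖⁻¹
  set t := ‖b‖⁻¹
  set p := NormedSpace.normalize a
  set q := NormedSpace.normalize b
  have hts : t ≤ 2 * s := by
    calc t ≤ (‖a‖ / 2)⁻¹ := inv_anti₀ (by positivity) hb
      _ = 2 * s := by rw [inv_div, div_eq_mul_inv]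
  have hπ : (8 * Real.pi)⁻¹ * 12 ≤ 1 := by
    rw [inv_mul_le_iff₀ (by positivity)]; linarith [Real.pi_gt_three]
  have hsplit : oseenTensor a g - oseenTensor b g = (8 * Real.pi)⁻¹ •
      ((s - t) • (g + ⟪p, g⟫ • p) + t • (⟪p, g⟫ • p - ⟪q, g⟫ • q)) := by
    rw [oseenTensor_apply_s16, oseenTensor_apply_s16]; module
  calc ‖oseenTensor a g - oseenTensor b g‖
      ≤ (8 * Real.pi)⁻¹ * (s * t * ‖a - b‖ * (2 * ‖g‖) + t * (2 * ‖g‖ * (2 * s * ‖a - b‖))) := by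
        rw [hsplit, norm_smul, Real.norm_of_nonneg (by positivity)]
        gcongr
        refine norm_add_le_of_le ?_ ?_ <;> rw [norm_smul, Real.norm_eq_abs]
        · exact mul_le_mul (abs_inv_norm_sub_inv_norm_le ha hb0)
            (norm_add_inner_smul_le (norm_normalize_le a) g) (norm_nonneg _) (by positivity)
        · rw [abs_of_nonneg (by positivity)]
          gcongr
          refine (norm_inner_smul_sub_inner_smul_le (norm_normalize_le a) (norm_normalize_le b)
            g).trans ?_
          gcongr
          exact norm_normalize_sub_normalize_le ha b
    _ = (8 * Real.pi)⁻¹ * 6 * (s * t * ‖g‖ * ‖a - b‖) := by ring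
    _ ≤ (8 * Real.pi)⁻¹ * 6 * (s * (2 * s) * ‖g‖ * ‖a - b‖) := by gcongr
    _ = ((8 * Real.pi)⁻¹ * 12) * (‖g‖ * s ^ 2 * ‖a - b‖) := by ring
    _ ≤ ‖g‖ * (‖a‖ ^ 2)⁻¹ * ‖a - b‖ := by
        rw [inv_pow]; exact mul_le_of_le_one_left (by positivity) hπ

/-- for `ρ ∈ L¹(ℝ³) ∩ L^∞(ℝ³)` and a fixed vector `g₀ ∈ ℝ³`, the Oseen
convolution `v(x) = ∫ Φ(x − y) g₀ ρ(y) dy` is well defined (the integrand is integrable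
for every `x`) and Lipschitz: there is a universal constant `C > 0` with
`‖v(x) − v(x')‖ ≤ C ‖g₀‖ (‖ρ‖_{L¹} + ‖ρ‖_{L^∞}) ‖x − x'‖` for all `x, x'`. -/
theorem oseen_convolution_integrable_and_lipschitz :
    ∃ C : ℝ, 0 < C ∧
      ∀ (ρ : E3 → ℝ) (g₀ : E3),
        Integrable ρ (volume : Measure E3) →
        MemLp ρ ⊤ (volume : Measure E3) →
        (∀ x : E3, Integrable (fun y => ρ y • oseenTensor (x - y) g₀) (volume : Measure E3)) ∧
        ∀ x x' : E3,
          ‖(∫ y, ρ y • oseenTensor (x - y) g₀) - ∫ y, ρ y • oseenTensor (x' - y) g₀‖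
            ≤ C * ‖g₀‖ * ((∫ y, |ρ y|) + (eLpNorm ρ ⊤ (volume : Measure E3)).toReal)
              * ‖x - x'‖ := by
  have hc := unitBallIntegralInvNormPow_nonneg (volume : Measure E3) 1
  have hc' := unitBallIntegralInvNormPow_nonneg (volume : Measure E3) 2
  refine ⟨6 * (unitBallIntegralInvNormPow volume 1 + unitBallIntegralInvNormPow volume 2 + 1),
    by positivity, fun ρ g₀ hρ hρ_top => ?_⟩
  have hdim : 1 + 1 < finrank ℝ E3 := by simp
  have hK : StronglyMeasurable fun z => oseenTensor z g₀ :=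
    (measurable_oseenTensor_apply g₀).stronglyMeasurable
  have hKA : ∀ z : E3, ‖oseenTensor z g₀‖ ≤ ‖g₀‖ * (‖z‖ ^ 1)⁻¹ := by
    simpa only [pow_one] using fun z => norm_oseenTensor_apply_le z g₀
  have hKB : ∀ a b : E3, 2 * ‖a - b‖ ≤ ‖a‖ →
      ‖oseenTensor a g₀ - oseenTensor b g₀‖ ≤ ‖g₀‖ * (‖a‖ ^ (1 + 1))⁻¹ * ‖a - b‖ :=
    fun a b hab => norm_oseenTensor_apply_sub_le hab g₀
  have hN : ∀ᵐ y ∂volume, |ρ y| ≤ (eLpNorm ρ ⊤ volume).toReal :=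
    hρ_top.ae_norm_le_toReal_eLpNorm_top
  exact ⟨integrable_smul_comp_sub volume hK (by omega) hKA hρ hN,
    norm_integral_smul_comp_sub_sub_le volume hK hdim (norm_nonneg g₀) hKA hKB hρ hN⟩
end
end
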